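/- Let F be a free group of rank d ≥ 2 and S a finite symmetric generating set of F with word metric d_S. Let f ∈ ∂(F,d_S) be a metric functional, and let K = { x ∈ F : x.h = h for every h in the orbit {g.f : g ∈ F} } be the pointwise stabilizer of the orbit of f. Then K = {1}. -/

import Mathlib

open Filter Topology

section Defs

variable {G : Type*}

/-- `d` is a metric on `X` (nonnegative, vanishing exactly on the diagonal,
symmetric, triangle inequality). -/
def IsMetric {X : Type*} (d : X → X → ℝ) : Prop :=
  (∀ x y, 0 ≤ d x y) ∧ (∀ x y, d x y = 0 ↔ x = y) ∧ (∀ x y, d x y = d y x) ∧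
    (∀ x y z, d x z ≤ d x y + d y z)

/-- The Busemann function of `x` with base point `1`: `b_x(y) = d(x,y) - d(x,1)`. -/
def bus [Group G] (d : G → G → ℝ) (x y : G) : ℝ := d x y - d x 1

/-- `h` belongs to the metric-functional boundary `∂(G,d)`: it is a pointwise
limit of Busemann functions and is not itself a Busemann function. -/
def InBoundary [Group G] (d : G → G → ℝ) (h : G → ℝ) : Prop :=
  (∃ u : ℕ → G, ∀ y : G, Tendsto (fun n => bus d (u n) y) atTop (𝓝 (h y))) ∧
    ∀ x : G, h ≠ bus d x

/-- The action of `x ∈ G` on functions: `(x.h)(y) = h(x⁻¹y) - h(x⁻¹)`. -/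
def act [Group G] (x : G) (h : G → ℝ) : G → ℝ := fun y => h (x⁻¹ * y) - h x⁻¹

/-- `S` is a finite symmetric generating set of `G`. -/
def FinSymGen [Group G] (S : Set G) : Prop :=
  S.Finite ∧ (∀ s ∈ S, s⁻¹ ∈ S) ∧ Subgroup.closure S = ⊤

/-- The word length of `x` with respect to `S`: the least `n` such that `x`
is a product of `n` elements of `S`. -/
noncomputable def wordLength [Group G] (S : Set G) (x : G) : ℕ :=
  sInf {n : ℕ | ∃ l : List G, (∀ s ∈ l, s ∈ S) ∧ l.length = n ∧ l.prod = x}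

/-- The word metric with respect to `S` : `d_S(x,y) = |x⁻¹y|_S`. -/
noncomputable def wordDist [Group G] (S : Set G) (x y : G) : ℝ :=
  (wordLength S (x⁻¹ * y) : ℝ)

/-- `(G,d)` is quasi-isometric to a Cayley graph of `G`. -/
def QIToCayley [Group G] (d : G → G → ℝ) : Prop :=
  ∃ S : Set G, FinSymGen S ∧ ∃ φ : G → G, ∃ C : ℝ, 0 < C ∧
    (∀ y : G, ∃ x : G, wordDist S (φ x) y ≤ C) ∧
    ∀ x y : G, C⁻¹ * d x y - C ≤ wordDist S (φ x) (φ y) ∧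
      wordDist S (φ x) (φ y) ≤ C * d x y + C

/-- A Banach metric on `G`: an integer-valued, left-invariant, proper metric,
quasi-isometric to a Cayley graph, all of whose metric functionals are unbounded. -/
def IsBanachMetric [Group G] (d : G → G → ℝ) : Prop :=
  IsMetric d ∧
  (∀ x y : G, ∃ n : ℕ, d x y = n) ∧
  (∀ x y z : G, d (z * x) (z * y) = d x y) ∧
  (∀ r : ℝ, {x : G | d x 1 ≤ r}.Finite) ∧
  QIToCayley d ∧
  ∀ h : G → ℝ, InBoundary d h → ¬ ∃ B : ℝ, ∀ x : G, |h x| ≤ B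

/-- A virtual homomorphism on `G`: a function `φ : G → ℤ` restricting to a
nontrivial homomorphism on some finite index subgroup. -/
def IsVirtualHom [Group G] (φ : G → ℤ) : Prop :=
  ∃ H : Subgroup G, H.FiniteIndex ∧
    (∀ a b : G, a ∈ H → b ∈ H → φ (a * b) = φ a + φ b) ∧
    ∃ a ∈ H, φ a ≠ 0

end Defs

/-!
For `f` with `f 1 = 0`, an element `x` fixes `g.f` iff `c = g⁻¹ x⁻¹ g` shifts `f` by a constant,
`f (c * z) = f z + f c`. These `c` form a subgroup on which `f` is a homomorphism, so the pointwise
stabilizer of the orbit of `f` is the normal core of that subgroup. If the core contained `x ≠ 1`,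
then, the rank being at least two, some conjugate of `x` would not commute with `x`, and their
commutator `y ≠ 1` would lie in the core with `f (y ^ k) = 0` for all `k`. The word metric being
integer-valued, `f` agrees on any finite set with a Busemann function `b_p`, so `p` would be
equidistant from `y ^ k`, `1` and `y ^ (-k)`. Comparing the word metric with the Cayley tree of a
free basis, which is bi-Lipschitz to it and `0`-hyperbolic, shows that this fails for large `k`.
-/

open scoped commutatorElement

section WordLength

variable {G : Type*} [Group G] {S : Set G}

lemma wordLength_le_length {l : List G} (hl : ∀ s ∈ l, s ∈ S) : wordLength S l.prod ≤ l.length :=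
  Nat.sInf_le ⟨l, hl, rfl, rfl⟩

lemma FinSymGen.exists_list_prod_eq (hS : FinSymGen S) (g : G) :
    ∃ l : List G, (∀ s ∈ l, s ∈ S) ∧ l.prod = g := by
  have hsymm : S ∪ S⁻¹ = S := Set.union_eq_left.mpr fun s hs => by simpa using hS.2.1 _ hs
  apply Submonoid.exists_list_of_mem_closure
  rw [← hsymm, ← Subgroup.closure_toSubmonoid, hS.2.2]
  trivial

lemma FinSymGen.exists_list_length_eq_wordLength (hS : FinSymGen S) (g : G) :
    ∃ l : List G, (∀ s ∈ l, s ∈ S) ∧ l.length = wordLength S g ∧ l.prod = g := by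
  obtain ⟨l, hl, rfl⟩ := hS.exists_list_prod_eq g
  exact Nat.sInf_mem (s := {n | ∃ l' : List G, (∀ s ∈ l', s ∈ S) ∧ l'.length = n ∧
    l'.prod = l.prod}) ⟨l.length, l, hl, rfl, rfl⟩

lemma wordLength_one : wordLength S (1 : G) = 0 :=
  Nat.le_zero.mp (wordLength_le_length (l := []) (by simp))

lemma FinSymGen.wordLength_mul_le (hS : FinSymGen S) (g h : G) :
    wordLength S (g * h) ≤ wordLength S g + wordLength S h := by
  obtain ⟨l₁, hl₁, hlen₁, rfl⟩ := hS.exists_list_length_eq_wordLength g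
  obtain ⟨l₂, hl₂, hlen₂, rfl⟩ := hS.exists_list_length_eq_wordLength h
  rw [← hlen₁, ← hlen₂, ← List.length_append, ← List.prod_append]
  exact wordLength_le_length fun s hs => (List.mem_append.mp hs).elim (hl₁ s) (hl₂ s)

lemma FinSymGen.wordLength_inv_le (hS : FinSymGen S) (g : G) :
    wordLength S g⁻¹ ≤ wordLength S g := by
  obtain ⟨l, hl, hlen, rfl⟩ := hS.exists_list_length_eq_wordLength g
  rw [← hlen, List.prod_inv_reverse, ← List.length_map (f := (·⁻¹)), ← List.length_reverse]
  refine wordLength_le_length fun s hs => ?_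
  obtain ⟨t, ht, rfl⟩ := List.mem_map.mp (List.mem_reverse.mp hs)
  exact hS.2.1 t (hl t ht)

lemma FinSymGen.wordLength_inv (hS : FinSymGen S) (g : G) : wordLength S g⁻¹ = wordLength S g :=
  (hS.wordLength_inv_le g).antisymm (by simpa using hS.wordLength_inv_le g⁻¹)

lemma le_mul_length_of_subadditive {N : G → ℕ} (h1 : N 1 = 0)
    (hmul : ∀ x y, N (x * y) ≤ N x + N y) {K : ℕ} {l : List G} (hl : ∀ s ∈ l, N s ≤ K) :
    N l.prod ≤ K * l.length := by
  induction l with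
  | nil => simp [h1]
  | cons s l ih =>
    rw [List.prod_cons, List.length_cons, mul_add_one, add_comm (K * _)]
    exact (hmul _ _).trans (add_le_add (hl s List.mem_cons_self)
      (ih fun t ht => hl t (List.mem_cons_of_mem s ht)))

end WordLength

section BusemannLimit

variable {G : Type*} [Group G]

def IsBusemannLimit (d : G → G → ℝ) (h : G → ℝ) : Prop :=
  ∃ u : ℕ → G, ∀ y : G, Tendsto (fun n => bus d (u n) y) atTop (𝓝 (h y))

lemma IsBusemannLimit.apply_one {d : G → G → ℝ} {h : G → ℝ} (hh : IsBusemannLimit d h) :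
    h 1 = 0 := by
  obtain ⟨u, hu⟩ := hh
  exact tendsto_nhds_unique (hu 1) (by simp [bus])

lemma eventually_eq_of_tendsto_intCast {ι : Type*} {l : Filter ι} [l.NeBot] {a : ι → ℤ} {r : ℝ}
    (h : Tendsto (fun n => (a n : ℝ)) l (𝓝 r)) : ∀ᶠ n in l, (a n : ℝ) = r := by
  obtain ⟨m, rfl⟩ : r ∈ Set.range ((↑) : ℤ → ℝ) :=
    Real.isClosed_range_intCast.mem_of_tendsto h (Eventually.of_forall fun n => ⟨a n, rfl⟩)
  have ha : Tendsto a l (𝓝 m) := Int.isClosedEmbedding_coe_real.tendsto_nhds_iff.mpr h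
  rw [nhds_discrete, tendsto_pure] at ha
  exact ha.mono fun n hn => by rw [hn]

lemma IsBusemannLimit.exists_eqOn_bus {d : G → G → ℝ} (hd : ∀ x y, ∃ n : ℕ, d x y = n)
    {h : G → ℝ} (hh : IsBusemannLimit d h) (s : Finset G) :
    ∃ x, ∀ z ∈ s, bus d x z = h z := by
  obtain ⟨u, hu⟩ := hh
  choose e he using hd
  have hint : ∀ z, ∀ᶠ n in atTop, bus d (u n) z = h z := fun z => by
    have := hu z
    simp only [bus, he] at this ⊢
    exact_mod_cast eventually_eq_of_tendsto_intCast
      (a := fun n => (e (u n) z : ℤ) - e (u n) 1) (by exact_mod_cast this)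
  obtain ⟨n, hn⟩ := ((eventually_all_finset s).mpr fun z _ => hint z).exists
  exact ⟨u n, hn⟩

lemma IsBusemannLimit.exists_equidistant {d : G → G → ℝ} (hd : ∀ x y, ∃ n : ℕ, d x y = n)
    {h : G → ℝ} (hh : IsBusemannLimit d h) {z₁ z₂ : G} (h₁ : h z₁ = 0) (h₂ : h z₂ = 0) :
    ∃ p, d p z₁ = d p 1 ∧ d p z₂ = d p 1 := by
  classical
  obtain ⟨p, hp⟩ := hh.exists_eqOn_bus hd {z₁, z₂}
  have hp₁ := hp z₁ (by simp)
  have hp₂ := hp z₂ (by simp)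
  rw [bus, h₁, sub_eq_zero] at hp₁
  rw [bus, h₂, sub_eq_zero] at hp₂
  exact ⟨p, hp₁, hp₂⟩

lemma InBoundary.isBusemannLimit {d : G → G → ℝ} {h : G → ℝ} (hh : InBoundary d h) :
    IsBusemannLimit d h :=
  hh.1

end BusemannLimit

section TranslationSubgroup

variable {G : Type*} [Group G]

def translationSubgroup (f : G → ℝ) (hf : f 1 = 0) : Subgroup G where
  carrier := {c | ∀ z, f (c * z) = f z + f c}
  one_mem' z := by simp [hf]
  mul_mem' {a b} ha hb z := by
    rw [mul_assoc, ha, hb, ha b]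
    ring
  inv_mem' {c} hc z := by
    have h₁ := hc (c⁻¹ * z)
    have h₂ := hc c⁻¹
    simp only [mul_inv_cancel_left, mul_inv_cancel, hf] at h₁ h₂
    linarith

variable {f : G → ℝ} {hf : f 1 = 0}

def translationHom (f : G → ℝ) (hf : f 1 = 0) : translationSubgroup f hf →* Multiplicative ℝ where
  toFun c := Multiplicative.ofAdd (f c)
  map_one' := by simp [hf]
  map_mul' a b := by
    rw [← ofAdd_add, Subgroup.coe_mul, a.2 b, add_comm]

lemma apply_zpow_of_mem_translationSubgroup {c : G} (hc : c ∈ translationSubgroup f hf) (k : ℤ) :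
    f (c ^ k) = k * f c := by
  have := map_zpow (translationHom f hf) ⟨c, hc⟩ k
  simpa [translationHom, ← ofAdd_zsmul] using this

lemma apply_commutatorElement_of_mem_translationSubgroup {a b : G}
    (ha : a ∈ translationSubgroup f hf) (hb : b ∈ translationSubgroup f hf) : f ⁅a, b⁆ = 0 := by
  have h : translationHom f hf ⁅(⟨a, ha⟩ : translationSubgroup f hf), ⟨b, hb⟩⁆ = 1 := by
    rw [map_commutatorElement]
    exact (Commute.all _ _).commutator_eq
  simpa [translationHom, commutatorElement_def] using h

lemma act_apply_one (g : G) (h : G → ℝ) : act g h 1 = 0 := by simp [act]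

lemma act_eq_self_iff (hf : f 1 = 0) {x : G} : act x f = f ↔ x⁻¹ ∈ translationSubgroup f hf := by
  simp only [funext_iff, act]
  exact ⟨fun h z => by linarith [h z], fun h z => by linarith [h z]⟩

lemma mem_translationSubgroup_act {g c : G} :
    c ∈ translationSubgroup (act g f) (act_apply_one g f) ↔
      g⁻¹ * c * g ∈ translationSubgroup f hf := by
  show (∀ z, act g f (c * z) = act g f z + act g f c) ↔
    ∀ w, f (g⁻¹ * c * g * w) = f w + f (g⁻¹ * c * g)
  simp only [act]
  constructor
  · intro h w
    have h₁ := h (g * w)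
    have h₂ := h g
    simp only [← mul_assoc, inv_mul_cancel, one_mul, hf] at h₁ h₂
    linarith
  · intro h z
    have h₁ := h (g⁻¹ * z)
    have h₂ := h g⁻¹
    simp only [mul_assoc, mul_inv_cancel_left, mul_inv_cancel, mul_one] at h₁ h₂
    linarith

lemma setOf_forall_act_act_eq :
    {x : G | ∀ g, act x (act g f) = act g f} = (translationSubgroup f hf).normalCore := by
  ext x
  show (∀ g, act x (act g f) = act g f) ↔ x ∈ (translationSubgroup f hf).normalCore
  rw [← Subgroup.inv_mem_iff]
  refine ⟨fun h b => ?_, fun h g => ?_⟩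
  · have := (mem_translationSubgroup_act (hf := hf)).mp
      ((act_eq_self_iff (act_apply_one b⁻¹ f)).mp (h b⁻¹))
    simpa using this
  · exact (act_eq_self_iff _).mpr (mem_translationSubgroup_act.mpr (by simpa using h g⁻¹))

end TranslationSubgroup

namespace List

variable {β : Type*} [DecidableEq β]

def commonPrefixLength : List β → List β → ℕ
  | a :: A, b :: B => if a = b then commonPrefixLength A B + 1 else 0
  | _, _ => 0

@[simp] lemma commonPrefixLength_nil_left (B : List β) : commonPrefixLength [] B = 0 := rfl

@[simp] lemma commonPrefixLength_nil_right (A : List β) : commonPrefixLength A [] = 0 := by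
  cases A <;> rfl

lemma commonPrefixLength_cons_cons (a b : β) (A B : List β) :
    commonPrefixLength (a :: A) (b :: B) = if a = b then commonPrefixLength A B + 1 else 0 := rfl

lemma commonPrefixLength_comm (A B : List β) :
    commonPrefixLength A B = commonPrefixLength B A := by
  induction A generalizing B with
  | nil => simp
  | cons a A ih =>
    cases B with
    | nil => simp
    | cons b B =>
      rcases eq_or_ne a b with rfl | hab
      · simp [commonPrefixLength_cons_cons, ih]
      · simp [commonPrefixLength_cons_cons, hab, hab.symm]

@[simp] lemma commonPrefixLength_self (A : List β) : commonPrefixLength A A = A.length := by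
  induction A <;> simp_all [commonPrefixLength_cons_cons]

lemma min_commonPrefixLength_le (A B C : List β) :
    min (commonPrefixLength A B) (commonPrefixLength B C) ≤ commonPrefixLength A C := by
  induction B generalizing A C with
  | nil => simp
  | cons b B ih =>
    cases A with
    | nil => simp
    | cons a A =>
      cases C with
      | nil => simp
      | cons c C =>
        rcases eq_or_ne a b with rfl | hab
        · rcases eq_or_ne a c with rfl | hac
          · simpa [commonPrefixLength_cons_cons] using ih A C
          · simp [commonPrefixLength_cons_cons, hac]
        · simp [commonPrefixLength_cons_cons, hab]

lemma exists_eq_append_of_commonPrefixLength (A B : List β) :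
    ∃ P A' B', A = P ++ A' ∧ B = P ++ B' ∧ P.length = commonPrefixLength A B ∧
      ∀ a ∈ A'.head?, ∀ b ∈ B'.head?, a ≠ b := by
  induction A generalizing B with
  | nil => exact ⟨[], [], B, rfl, rfl, rfl, by simp⟩
  | cons a A ih =>
    cases B with
    | nil => exact ⟨[], a :: A, [], rfl, rfl, by simp, by simp⟩
    | cons b B =>
      rcases eq_or_ne a b with rfl | hab
      · obtain ⟨P, A', B', rfl, rfl, hP, hhead⟩ := ih B
        exact ⟨a :: P, A', B', rfl, rfl, by simp [commonPrefixLength_cons_cons, hP], hhead⟩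
      · exact ⟨[], a :: A, b :: B, rfl, rfl, by simp [commonPrefixLength_cons_cons, hab],
          by simpa⟩

end List

namespace FreeGroup

section Letters

variable {α : Type*}

lemma fst_eq_imp_snd_eq_iff_ne (p q : α × Bool) : (p.1 = q.1 → p.2 = q.2) ↔ q ≠ (p.1, !p.2) := by
  obtain ⟨i, s⟩ := p
  obtain ⟨j, t⟩ := q
  cases s <;> cases t <;> simp [eq_comm]

lemma ne_inv_comm {p q : α × Bool} : q ≠ (p.1, !p.2) ↔ p ≠ (q.1, !q.2) := by
  obtain ⟨i, s⟩ := p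
  obtain ⟨j, t⟩ := q
  cases s <;> cases t <;> simp [eq_comm]

lemma isReduced_append_iff {L₁ L₂ : List (α × Bool)} :
    IsReduced (L₁ ++ L₂) ↔
      IsReduced L₁ ∧ IsReduced L₂ ∧ ∀ p ∈ L₁.getLast?, ∀ q ∈ L₂.head?, q ≠ (p.1, !p.2) := by
  simp only [IsReduced, List.isChain_append, fst_eq_imp_snd_eq_iff_ne]

end Letters

variable {α : Type*} [DecidableEq α]

def gromovProduct (x y : FreeGroup α) : ℕ := x.toWord.commonPrefixLength y.toWord

lemma gromovProduct_comm (x y : FreeGroup α) : gromovProduct x y = gromovProduct y x :=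
  List.commonPrefixLength_comm _ _

lemma gromovProduct_self (x : FreeGroup α) : gromovProduct x x = norm x :=
  List.commonPrefixLength_self _

lemma min_gromovProduct_le (x y z : FreeGroup α) :
    min (gromovProduct x y) (gromovProduct y z) ≤ gromovProduct x z :=
  List.min_commonPrefixLength_le _ _ _

lemma norm_inv_mul_add_two_mul_gromovProduct (x y : FreeGroup α) :
    norm (x⁻¹ * y) + 2 * gromovProduct x y = norm x + norm y := by
  obtain ⟨P, A, B, hx, hy, hP, hhead⟩ := x.toWord.exists_eq_append_of_commonPrefixLength y.toWord
  have hA : IsReduced (invRev A) :=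
    (isReduced_toWord (x := x⁻¹)).infix ⟨[], invRev P, by simp [toWord_inv, hx, invRev_append]⟩
  have hB : IsReduced B := (isReduced_toWord (x := y)).infix ⟨P, [], by simp [hy]⟩
  have hAB : IsReduced (invRev A ++ B) := by
    refine List.isChain_append.mpr ⟨hA, hB, fun p hp q hq hpq => ?_⟩
    simp only [invRev, List.getLast?_reverse, List.head?_map, Option.mem_def,
      Option.map_eq_some_iff] at hp
    obtain ⟨a, ha, rfl⟩ := hp
    have := hhead a ha q hq
    grind
  have hxy : x⁻¹ * y = mk (invRev A ++ B) := by
    rw [← mk_toWord (x := x), ← mk_toWord (x := y), hx, hy, ← mul_mk, ← mul_mk, ← mul_mk, ← inv_mk]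
    group
  have hnorm : norm (x⁻¹ * y) = A.length + B.length := by
    rw [norm, hxy, toWord_mk, hAB.reduce_eq, List.length_append, invRev_length]
  simp only [norm, gromovProduct, ← hP] at hnorm ⊢
  rw [hx, hy, List.length_append, List.length_append] at *
  omega

lemma norm_le_gromovProduct_add_norm_inv_mul (x y : FreeGroup α) :
    norm x ≤ gromovProduct x y + norm (x⁻¹ * y) := by
  have h := norm_inv_mul_add_two_mul_gromovProduct x y
  have htri : norm x ≤ norm y + norm (x⁻¹ * y) := by
    simpa [← norm_inv_eq (x := x⁻¹ * y)] using norm_mul_le y (x⁻¹ * y)⁻¹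
  omega

lemma exists_norm_mul_prod_take_le {K : ℕ} (a : FreeGroup α) {l : List (FreeGroup α)}
    (hl : ∀ s ∈ l, norm s ≤ K) :
    ∃ i, norm (a * (l.take i).prod) ≤ gromovProduct a (a * l.prod) + K := by
  induction l generalizing a with
  | nil => exact ⟨0, by simp [gromovProduct_self]⟩
  | cons s l ih =>
    obtain ⟨i, hi⟩ := ih (a * s) fun t ht => hl t (List.mem_cons_of_mem s ht)
    have hmin := min_gromovProduct_le a (a * s) (a * s * l.prod)
    rw [List.prod_cons, ← mul_assoc]
    rcases le_total (gromovProduct a (a * s)) (gromovProduct (a * s) (a * s * l.prod)) with h | h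
    · have hs := norm_le_gromovProduct_add_norm_inv_mul a (a * s)
      rw [inv_mul_cancel_left] at hs
      have := hl s List.mem_cons_self
      exact ⟨0, by simp only [List.take_zero, List.prod_nil, mul_one]; omega⟩
    · exact ⟨i + 1, by simp only [List.take_succ_cons, List.prod_cons, ← mul_assoc]; omega⟩

open reduceCyclically in
lemma mk_conjugator_mul_mk_reduceCyclically (x : FreeGroup α) :
    mk (conjugator x.toWord) * mk (reduceCyclically x.toWord) * (mk (conjugator x.toWord))⁻¹ =
      x := by
  rw [inv_mk, mul_mk, mul_mk, conj_conjugator_reduceCyclically, mk_toWord]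

lemma reduceCyclically_toWord_ne_nil {x : FreeGroup α} (hx : x ≠ 1) :
    reduceCyclically x.toWord ≠ [] := by
  intro h
  apply hx
  rw [← mk_conjugator_mul_mk_reduceCyclically x, h, ← one_eq_mk, mul_one, mul_inv_cancel]

open reduceCyclically in
lemma norm_pow (x : FreeGroup α) {n : ℕ} (hn : n ≠ 0) :
    norm (x ^ n) = 2 * (conjugator x.toWord).length + n * (reduceCyclically x.toWord).length := by
  rw [norm, toWord_pow, reduce_flatten_replicate isReduced_toWord, if_neg hn]
  simp [invRev_length]
  ring

lemma le_norm_pow {x : FreeGroup α} (hx : x ≠ 1) (n : ℕ) : n ≤ norm (x ^ n) := by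
  rcases eq_or_ne n 0 with rfl | hn
  · simp
  · rw [norm_pow x hn]
    have := List.length_pos_iff.mpr (reduceCyclically_toWord_ne_nil hx)
    nlinarith

lemma gromovProduct_pow_inv_pow (x : FreeGroup α) {n : ℕ} (hn : n ≠ 0) :
    gromovProduct (x ^ n) (x ^ n)⁻¹ = (reduceCyclically.conjugator x.toWord).length := by
  have h := norm_inv_mul_add_two_mul_gromovProduct (x ^ n) (x ^ n)⁻¹
  rw [← mul_inv_rev, ← pow_add, norm_inv_eq, norm_inv_eq, norm_pow x hn,
    norm_pow x (by omega)] at h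
  linarith

lemma exists_eq_conj_isCyclicallyReduced {x : FreeGroup α} (hx : x ≠ 1) :
    ∃ w c : FreeGroup α, x = w * c * w⁻¹ ∧ IsCyclicallyReduced c.toWord ∧ c ≠ 1 := by
  have hc := reduceCyclically.isCyclicallyReduced (isReduced_toWord (x := x))
  refine ⟨_, _, (mk_conjugator_mul_mk_reduceCyclically x).symm, ?_, ?_⟩
  · rwa [toWord_mk, hc.isReduced.reduce_eq]
  · rw [Ne, ← toWord_eq_nil_iff, toWord_mk, hc.isReduced.reduce_eq]
    exact reduceCyclically_toWord_ne_nil hx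

lemma exists_letter_ne [Nontrivial α] (p q r : α × Bool) : ∃ a, a ≠ p ∧ a ≠ q ∧ a ≠ r := by
  obtain ⟨i, j, hij⟩ := exists_pair_ne α
  have h4 : ({(i, true), (i, false), (j, true), (j, false)} : Finset (α × Bool)).card = 4 := by
    simp [Finset.card_insert_of_notMem, hij]
  obtain ⟨a, -, ha⟩ := Finset.exists_mem_notMem_of_card_lt_card
    (s := {p, q, r}) (Finset.card_le_three.trans_lt (by rw [h4]; norm_num))
  exact ⟨a, by simpa using ha⟩

lemma exists_not_commute_conj_of_isCyclicallyReduced [Nontrivial α] {c : FreeGroup α}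
    (hc : IsCyclicallyReduced c.toWord) (hc1 : c ≠ 1) : ∃ g, ¬Commute c (g * c * g⁻¹) := by
  have hL : c.toWord ≠ [] := by simpa using hc1
  obtain ⟨first, hfirst⟩ := Option.ne_none_iff_exists'.mp (mt List.head?_eq_none_iff.mp hL)
  obtain ⟨last, hlast⟩ := Option.ne_none_iff_exists'.mp (mt List.getLast?_eq_none_iff.mp hL)
  -- For `g = a b` chosen so that nothing cancels, `c * (g c g⁻¹)` and `(g c g⁻¹) * c` are
  -- reduced as written, and they begin with the different letters `first` and `a`.
  obtain ⟨a, ha₁, ha₂, -⟩ := exists_letter_ne (last.1, !last.2) first first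
  obtain ⟨b, hb₁, hb₂, hb₃⟩ := exists_letter_ne (a.1, !a.2) (first.1, !first.2) last
  set L := c.toWord
  set M := [a, b] ++ L ++ [(b.1, !b.2), (a.1, !a.2)] with hM_def
  have hM : IsReduced M := by
    refine isReduced_append_iff.mpr ⟨isReduced_append_iff.mpr ⟨?_, hc.isReduced, ?_⟩, ?_, ?_⟩
    · simpa [fst_eq_imp_snd_eq_iff_ne] using hb₁
    · simpa [hfirst] using ne_inv_comm.mp hb₂
    · simpa [fst_eq_imp_snd_eq_iff_ne] using ne_inv_comm.mp hb₁
    · rw [List.getLast?_append_of_ne_nil _ hL, hlast]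
      simpa using fun h₁ h₂ => hb₃ (Prod.ext h₁ h₂)
  have hLM : IsReduced (L ++ M) := by
    refine isReduced_append_iff.mpr ⟨hc.isReduced, hM, ?_⟩
    simpa [hlast, M] using ha₁
  have hML : IsReduced (M ++ L) := by
    refine isReduced_append_iff.mpr ⟨hM, hc.isReduced, ?_⟩
    rw [hM_def, List.getLast?_append_of_ne_nil _ (by simp)]
    simpa [hfirst] using ha₂.symm
  refine ⟨mk [a, b], fun hcomm => ha₂ ?_⟩
  have hconj : mk [a, b] * c * (mk [a, b])⁻¹ = mk M := by
    rw [← mk_toWord (x := c), inv_mk, mul_mk, mul_mk]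
    rfl
  have hword := congrArg toWord hcomm.eq
  rw [hconj, ← mk_toWord (x := c), mul_mk, mul_mk, toWord_mk, toWord_mk, hLM.reduce_eq,
    hML.reduce_eq] at hword
  have hhead := congrArg List.head? hword
  rw [List.head?_append_of_ne_nil _ hL, hfirst] at hhead
  simpa [M] using hhead.symm

lemma exists_not_commute_conj [Nontrivial α] {x : FreeGroup α} (hx : x ≠ 1) :
    ∃ g, ¬Commute x (g * x * g⁻¹) := by
  obtain ⟨w, c, rfl, hc, hc1⟩ := exists_eq_conj_isCyclicallyReduced hx
  obtain ⟨g, hg⟩ := exists_not_commute_conj_of_isCyclicallyReduced hc hc1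
  refine ⟨w * g * w⁻¹, fun h => hg ((Commute.conj_iff w).mp ?_)⟩
  rwa [show w * g * w⁻¹ * (w * c * w⁻¹) * (w * g * w⁻¹)⁻¹ = w * (g * c * g⁻¹) * w⁻¹ by group] at h

section WordMetric

variable {S : Set (FreeGroup α)}

lemma norm_le_mul_wordLength (hS : FinSymGen S) {K : ℕ} (hK : ∀ s ∈ S, norm s ≤ K)
    (g : FreeGroup α) : norm g ≤ K * wordLength S g := by
  obtain ⟨l, hl, hlen, rfl⟩ := hS.exists_list_length_eq_wordLength g
  rw [← hlen]
  exact le_mul_length_of_subadditive norm_one norm_mul_le fun s hs => hK s (hl s hs)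

lemma exists_wordLength_le_mul_norm [Finite α] (hS : FinSymGen S) :
    ∃ K, ∀ g : FreeGroup α, wordLength S g ≤ K * norm g := by
  obtain ⟨K, hK⟩ := (Set.finite_range fun i : α => wordLength S (of i)).bddAbove
  refine ⟨K, fun g => ?_⟩
  have hg : (g.toWord.map fun p => cond p.2 (of p.1) (of p.1)⁻¹).prod = g := by
    rw [← lift_mk, mk_toWord, lift_of_eq_id, MonoidHom.id_apply]
  calc wordLength S g = wordLength S (g.toWord.map fun p => cond p.2 (of p.1) (of p.1)⁻¹).prod := by
        rw [hg]
    _ ≤ K * (g.toWord.map fun p => cond p.2 (of p.1) (of p.1)⁻¹).length := by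
        refine le_mul_length_of_subadditive wordLength_one hS.wordLength_mul_le fun s hs => ?_
        obtain ⟨⟨i, b⟩, -, rfl⟩ := List.mem_map.mp hs
        cases b
        · simpa [hS.wordLength_inv] using hK ⟨i, rfl⟩
        · exact hK ⟨i, rfl⟩
    _ = K * norm g := by rw [List.length_map, norm]

/-- An `S`-geodesic from `a` to `b` passes within `K₂` of the branch point of `a` and `b` in the
tree (`exists_norm_mul_prod_take_le`); hence `(a | b)_S ≤ K₁ * ((a | b) + K₂)`. -/
lemma wordLength_add_wordLength_le (hS : FinSymGen S) {K₁ K₂ : ℕ}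
    (hK₁ : ∀ g, wordLength S g ≤ K₁ * norm g) (hK₂ : ∀ s ∈ S, norm s ≤ K₂) (a b : FreeGroup α) :
    wordLength S a + wordLength S b ≤
      2 * (K₁ * (gromovProduct a b + K₂)) + wordLength S (a⁻¹ * b) := by
  obtain ⟨l, hl, hlen, hprod⟩ := hS.exists_list_length_eq_wordLength (a⁻¹ * b)
  obtain ⟨i, hi⟩ := exists_norm_mul_prod_take_le a fun s hs => hK₂ s (hl s hs)
  rw [hprod, mul_inv_cancel_left] at hi
  set g := a * (l.take i).prod
  have ha : wordLength S a ≤ wordLength S g + (l.take i).length := by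
    calc wordLength S a = wordLength S (g * ((l.take i).prod)⁻¹) := by rw [mul_inv_cancel_right]
      _ ≤ wordLength S g + wordLength S (l.take i).prod := by
          rw [← hS.wordLength_inv (l.take i).prod]
          exact hS.wordLength_mul_le _ _
      _ ≤ wordLength S g + (l.take i).length := by
          gcongr
          exact wordLength_le_length fun s hs => hl s (List.mem_of_mem_take hs)
  have hb : wordLength S b ≤ wordLength S g + (l.drop i).length := by
    calc wordLength S b = wordLength S (g * (l.drop i).prod) := by
          rw [mul_assoc, List.prod_take_mul_prod_drop, hprod, mul_inv_cancel_left]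
      _ ≤ wordLength S g + wordLength S (l.drop i).prod := hS.wordLength_mul_le _ _
      _ ≤ wordLength S g + (l.drop i).length := by
          gcongr
          exact wordLength_le_length fun s hs => hl s (List.mem_of_mem_drop hs)
  have hg : wordLength S g ≤ K₁ * (gromovProduct a b + K₂) := (hK₁ g).trans (by gcongr)
  have hl' : (l.take i).length + (l.drop i).length = l.length := by
    rw [← List.length_append, List.take_append_drop]
  omega

lemma exists_pow_not_equidistant [Finite α] (hS : FinSymGen S) {y : FreeGroup α} (hy : y ≠ 1) :
    ∃ k : ℕ, ∀ p, wordDist S p (y ^ k) = wordDist S p 1 →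
      wordDist S p (y ^ k)⁻¹ ≠ wordDist S p 1 := by
  obtain ⟨K₂, hK₂⟩ := (hS.1.image norm).bddAbove
  replace hK₂ : ∀ s ∈ S, norm s ≤ K₂ := fun s hs => hK₂ ⟨s, hs, rfl⟩
  obtain ⟨K₁, hK₁⟩ := exists_wordLength_le_mul_norm hS
  set W := (reduceCyclically.conjugator y.toWord).length
  refine ⟨K₂ * (2 * (K₁ * (W + K₂))) + 1, fun p h₁ h₂ => ?_⟩
  set k := K₂ * (2 * (K₁ * (W + K₂))) + 1
  have hbound : ∀ z, wordDist S p z = wordDist S p 1 →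
      wordLength S z ≤ 2 * (K₁ * (gromovProduct p z + K₂)) := fun z hz => by
    simp only [wordDist, mul_one, Nat.cast_inj, hS.wordLength_inv] at hz
    have := wordLength_add_wordLength_le hS hK₁ hK₂ p z
    omega
  have hmin := min_gromovProduct_le (y ^ k) p (y ^ k)⁻¹
  rw [gromovProduct_pow_inv_pow y (by omega), gromovProduct_comm] at hmin
  have hwl : wordLength S (y ^ k) ≤ 2 * (K₁ * (W + K₂)) := by
    rcases min_le_iff.mp hmin with h | h
    · exact (hbound _ h₁).trans (by gcongr)
    · rw [← hS.wordLength_inv]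
      exact (hbound _ h₂).trans (by gcongr)
  have := (le_norm_pow hy k).trans (norm_le_mul_wordLength hS hK₂ _)
  have := Nat.mul_le_mul_left K₂ hwl
  omega

end WordMetric

end FreeGroup

lemma IsBusemannLimit.exists_zpow_ne_zero {α : Type*} [DecidableEq α] [Finite α]
    {S : Set (FreeGroup α)} (hS : FinSymGen S) {f : FreeGroup α → ℝ}
    (hf : IsBusemannLimit (wordDist S) f) {y : FreeGroup α} (hy : y ≠ 1) :
    ∃ k : ℤ, f (y ^ k) ≠ 0 := by
  obtain ⟨k, hk⟩ := FreeGroup.exists_pow_not_equidistant hS hy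
  by_contra! h
  obtain ⟨p, h₁, h₂⟩ := hf.exists_equidistant (fun _ _ => ⟨_, rfl⟩)
    (by simpa using h k) (by simpa using h (-k))
  exact hk p h₁ h₂

namespace FreeGroup

variable {α : Type*} [DecidableEq α] {S : Set (FreeGroup α)}

theorem normalCore_translationSubgroup_eq_bot [Nontrivial α] [Finite α] (hS : FinSymGen S)
    {f : FreeGroup α → ℝ} (hf : IsBusemannLimit (wordDist S) f) :
    (translationSubgroup f hf.apply_one).normalCore = ⊥ := by
  set N := (translationSubgroup f hf.apply_one).normalCore
  refine (Subgroup.eq_bot_iff_forall N).mpr fun x hx => ?_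
  by_contra hx1
  obtain ⟨g, hg⟩ := exists_not_commute_conj hx1
  have hgx : g * x * g⁻¹ ∈ N := (Subgroup.normalCore_normal _).conj_mem x hx g
  have hy : ⁅x, g * x * g⁻¹⁆ ∈ N := by
    rw [commutatorElement_def]
    exact N.mul_mem (N.mul_mem (N.mul_mem hx hgx) (N.inv_mem hx)) (N.inv_mem hgx)
  have hy₀ : f ⁅x, g * x * g⁻¹⁆ = 0 := apply_commutatorElement_of_mem_translationSubgroup
    (Subgroup.normalCore_le _ hx) (Subgroup.normalCore_le _ hgx)
  obtain ⟨k, hk⟩ := hf.exists_zpow_ne_zero hS (commutatorElement_eq_one_iff_commute.not.mpr hg)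
  exact hk (by rw [apply_zpow_of_mem_translationSubgroup (Subgroup.normalCore_le _ hy), hy₀,
    mul_zero])

end FreeGroup

/-- For any Cayley graph of the free group of rank `d ≥ 2` and
any metric functional `f` in its boundary, the pointwise stabilizer of the orbit
of `f` is trivial. -/
theorem freeGroup_orbit_pointwise_stabilizer_trivial
    {d : ℕ} (hd : 2 ≤ d) (S : Set (FreeGroup (Fin d))) (hS : FinSymGen S)
    (f : FreeGroup (Fin d) → ℝ) (hf : InBoundary (wordDist S) f) :
    {x : FreeGroup (Fin d) |
        ∀ g : FreeGroup (Fin d), act x (act g f) = act g f} = {1} := by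
  have : Nontrivial (Fin d) := Fin.nontrivial_iff_two_le.mpr hd
  rw [setOf_forall_act_act_eq (hf := hf.isBusemannLimit.apply_one),
    FreeGroup.normalCore_translationSubgroup_eq_bot hS hf.isBusemannLimit, Subgroup.coe_bot]
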